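/- arXiv:2309.15632 — 4 statements merged into one kernel-verified Lean document; each statement's English description precedes it below -/
import Mathlib

section
/- Let A ∈ ℝ^{n×n}, B ∈ ℝ^{n×m}, D ∈ ℝ^{n×q}, C ∈ ℝ^{p×n}, F ∈ ℝ^{p×q}, E ∈ ℝ^{q×q}. Suppose there exist X ∈ ℝ^{n×q} and U ∈ ℝ^{m×q} solving the regulator equations XE = AX + BU + D and 0 = CX + F, and suppose K ∈ ℝ^{m×n} is such that every eigenvalue of A − BK has negative real part. Set L = U + KX. Then for every pair of differentiable functions v : [0,∞) → ℝ^q and x : [0,∞) → ℝ^n satisfying v'(t) = E v(t) and x'(t) = A x(t) + B(−K x(t) + L v(t)) + D v(t) for all t ≥ 0, the tracking error e(t) = C x(t) + F v(t) tends to 0 as t → ∞. -/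
/-!
Put `z = x - X v`. The regulator equations turn the closed loop into `ż = (A - BK) z` and the
tracking error into `e = C z`. By uniqueness of solutions, `z t = exp (t (A - BK)) z 0`. Splitting
`z 0` into generalized eigenvectors of the complexified matrix, the component for the eigenvalue
`μ` is `exp (t μ)` times a polynomial in `t`, which tends to `0` because `Re μ < 0`.
-/

open Matrix Filter Topology

/-- A real square matrix is Hurwitz if every eigenvalue (element of the complex
spectrum) has negative real part. -/
def IsHurwitz {n : ℕ} (M : Matrix (Fin n) (Fin n) ℝ) : Prop :=
  ∀ μ ∈ spectrum ℂ (M.map Complex.ofReal), μ.re < 0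

open NormedSpace

attribute [local instance] Matrix.linftyOpNormedAddCommGroup Matrix.linftyOpNormedRing
  Matrix.linftyOpNormedAlgebra

section ExpSolution

variable {ι : Type*} [Fintype ι] [DecidableEq ι]

theorem hasDerivAt_exp_smul_mulVec (M : Matrix ι ι ℝ) (c : ι → ℝ) (t : ℝ) :
    HasDerivAt (fun s : ℝ => exp (s • M) *ᵥ c) (M *ᵥ (exp (t • M) *ᵥ c)) t := by
  let applyAt : Matrix ι ι ℝ →L[ℝ] (ι → ℝ) :=
    LinearMap.toContinuousLinearMap (LinearMap.applyₗ c ∘ₗ Matrix.toLin'.toLinearMap)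
  have h := applyAt.hasFDerivAt.comp_hasDerivAt t (hasDerivAt_exp_smul_const' M t)
  rwa [Matrix.mulVec_mulVec]

theorem eq_exp_smul_mulVec_of_hasDerivAt {M : Matrix ι ι ℝ} {z : ℝ → ι → ℝ}
    (hz : ∀ t ≥ (0 : ℝ), HasDerivAt z (M *ᵥ z t) t) {t : ℝ} (ht : 0 ≤ t) :
    z t = exp (t • M) *ᵥ z 0 := by
  have hLip : LipschitzWith ‖(Matrix.mulVecLin M).toContinuousLinearMap‖₊ (M *ᵥ ·) :=
    (Matrix.mulVecLin M).toContinuousLinearMap.lipschitz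
  refine ODE_solution_unique (v := fun _ => (M *ᵥ ·)) (fun _ => hLip)
    (fun s hs => (hz s hs.1).continuousAt.continuousWithinAt)
    (fun s hs => (hz s hs.1).hasDerivWithinAt)
    (fun s _ => (hasDerivAt_exp_smul_mulVec M _ s).continuousAt.continuousWithinAt)
    (fun s _ => (hasDerivAt_exp_smul_mulVec M _ s).hasDerivWithinAt)
    (by simp) ⟨ht, le_rfl⟩

end ExpSolution

theorem tendsto_pow_mul_exp_mul_atTop_nhds_zero (k : ℕ) {a : ℝ} (ha : a < 0) :
    Tendsto (fun t : ℝ => t ^ k * Real.exp (a * t)) atTop (𝓝 0) := by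
  simpa [Real.rpow_natCast] using
    tendsto_rpow_mul_exp_neg_mul_atTop_nhds_zero k (-a) (neg_pos.mpr ha)

section GenEigenDecay

variable {ι : Type*} [Fintype ι] [DecidableEq ι]

theorem exp_smul_eq_exp_smul_exp_smul_sub (M : Matrix ι ι ℂ) (μ : ℂ) (t : ℝ) :
    exp (t • M) = Complex.exp (t • μ) • exp (t • (M - μ • 1)) := by
  have hsplit : t • M = (t • μ) • (1 : Matrix ι ι ℂ) + t • (M - μ • 1) := by
    rw [smul_sub, smul_assoc]
    abel
  have hscalar :
      exp ((t • μ) • (1 : Matrix ι ι ℂ)) = algebraMap ℂ _ (Complex.exp (t • μ)) := by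
    rw [← Algebra.algebraMap_eq_smul_one, Complex.exp_eq_exp_ℂ]
    exact (algebraMap_exp_comm _).symm
  rw [hsplit, Matrix.exp_add_of_commute _ _ ((Commute.one_left _).smul_left _), hscalar]
  exact (Algebra.smul_def _ _).symm

theorem exp_smul_mulVec_eq_sum_of_pow_mulVec_eq_zero {N : Matrix ι ι ℂ} {w : ι → ℂ}
    {k : ℕ} (hw : (N ^ k) *ᵥ w = 0) (t : ℝ) :
    exp (t • N) *ᵥ w =
      ∑ j ∈ Finset.range k, ((j.factorial : ℝ)⁻¹ * t ^ j) • ((N ^ j) *ᵥ w) := by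
  let applyAt : Matrix ι ι ℂ →L[ℝ] (ι → ℂ) :=
    LinearMap.toContinuousLinearMap
      ((LinearMap.applyₗ w ∘ₗ Matrix.toLin'.toLinearMap).restrictScalars ℝ)
  have hterm (j : ℕ) : applyAt (((j.factorial : ℝ)⁻¹) • (t • N) ^ j)
      = ((j.factorial : ℝ)⁻¹ * t ^ j) • ((N ^ j) *ᵥ w) := by
    rw [_root_.map_smul, smul_pow, _root_.map_smul, smul_smul]
    rfl
  rw [exp_eq_tsum ℝ]
  change applyAt _ = _
  rw [applyAt.map_tsum (expSeries_summable' _)]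
  simp_rw [hterm]
  refine tsum_eq_sum fun j hj => ?_
  obtain ⟨i, rfl⟩ := Nat.exists_eq_add_of_le' (not_lt.mp (Finset.mem_range.not.mp hj))
  rw [pow_add N, ← Matrix.mulVec_mulVec, hw, Matrix.mulVec_zero, smul_zero]

theorem tendsto_exp_smul_mulVec_of_pow_mulVec_eq_zero {M : Matrix ι ι ℂ} {μ : ℂ}
    (hμ : μ.re < 0) {w : ι → ℂ} {k : ℕ} (hw : ((M - μ • 1) ^ k) *ᵥ w = 0) :
    Tendsto (fun t : ℝ => exp (t • M) *ᵥ w) atTop (𝓝 0) := by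
  simp_rw [exp_smul_eq_exp_smul_exp_smul_sub M μ, Matrix.smul_mulVec,
    exp_smul_mulVec_eq_sum_of_pow_mulVec_eq_zero hw, Finset.smul_sum]
  rw [← Finset.sum_const_zero (s := Finset.range k)]
  refine tendsto_finsetSum _ fun j _ => ?_
  set y := ((M - μ • 1) ^ j) *ᵥ w
  have hbound := (tendsto_pow_mul_exp_mul_atTop_nhds_zero j hμ).const_mul
    ((j.factorial : ℝ)⁻¹ * ‖y‖)
  rw [mul_zero] at hbound
  refine squeeze_zero_norm' ?_ hbound
  filter_upwards [eventually_ge_atTop 0] with t ht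
  have hre : (t • μ).re = μ.re * t := by simp [Complex.real_smul, mul_comm]
  rw [norm_smul, norm_smul, Complex.norm_exp, hre, Real.norm_of_nonneg (by positivity)]
  exact le_of_eq (by ring)

theorem tendsto_exp_smul_mulVec_of_forall_spectrum_re_neg {M : Matrix ι ι ℂ}
    (hM : ∀ μ ∈ spectrum ℂ M, μ.re < 0) (c : ι → ℂ) :
    Tendsto (fun t : ℝ => exp (t • M) *ᵥ c) atTop (𝓝 0) := by
  let decaying : Submodule ℂ (ι → ℂ) :=
    { carrier := {w | Tendsto (fun t : ℝ => exp (t • M) *ᵥ w) atTop (𝓝 0)}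
      add_mem' := fun hv hw => by simpa [Matrix.mulVec_add] using hv.add hw
      zero_mem' := by simp
      smul_mem' := fun a w hw => by simpa [Matrix.mulVec_smul] using hw.const_smul a }
  have hpow (μ : ℂ) (k : ℕ) :
      Matrix.toLinAlgEquiv' ((M - μ • 1) ^ k) = (Matrix.toLinAlgEquiv' M - μ • 1) ^ k := by
    rw [map_pow, map_sub, map_smul, map_one]
  suffices ⊤ ≤ decaying from this Submodule.mem_top
  rw [← Module.End.iSup_maxGenEigenspace_eq_top (Matrix.toLinAlgEquiv' M)]
  refine iSup_le fun μ w hw => ?_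
  obtain ⟨k, hk⟩ := (Module.End.mem_maxGenEigenspace _ μ w).mp hw
  rcases eq_or_ne w 0 with rfl | hw0
  · exact decaying.zero_mem
  have hμ : μ ∈ spectrum ℂ M := by
    rw [← AlgEquiv.spectrum_eq Matrix.toLinAlgEquiv' M]
    refine (Module.End.hasEigenvalue_of_hasGenEigenvalue (k := k) ?_).mem_spectrum
    exact Module.End.hasGenEigenvalue_iff.mpr <| (Submodule.ne_bot_iff _).mpr
      ⟨w, Module.End.mem_genEigenspace_nat.mpr hk, hw0⟩
  refine tendsto_exp_smul_mulVec_of_pow_mulVec_eq_zero (hM μ hμ) (k := k) ?_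
  rw [← Matrix.toLinAlgEquiv'_apply, hpow, hk]

end GenEigenDecay

theorem IsHurwitz.tendsto_exp_smul_mulVec {n : ℕ} {M : Matrix (Fin n) (Fin n) ℝ}
    (hM : IsHurwitz M) (c : Fin n → ℝ) :
    Tendsto (fun t : ℝ => exp (t • M) *ᵥ c) atTop (𝓝 0) := by
  have hexp (t : ℝ) : exp (t • M.map Complex.ofReal) = (exp (t • M)).map Complex.ofReal := by
    have hsmul : (t • M).map Complex.ofReal = t • M.map Complex.ofReal := by ext; simp
    rw [← hsmul]
    exact (map_exp Complex.ofRealHom.mapMatrix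
      (continuous_id.matrix_map Complex.continuous_ofReal) (t • M)).symm
  have hre : Continuous fun w : Fin n → ℂ => fun i => (w i).re := by fun_prop
  have h := (hre.tendsto 0).comp
    (tendsto_exp_smul_mulVec_of_forall_spectrum_re_neg hM (Complex.ofReal ∘ c))
  refine (h.congr fun t => ?_).trans (by simp [Pi.zero_def])
  ext i
  rw [Function.comp_apply, hexp]
  exact congrArg Complex.re (RingHom.map_mulVec Complex.ofRealHom (exp (t • M)) c i).symm

theorem IsHurwitz.tendsto_of_hasDerivAt {n : ℕ} {M : Matrix (Fin n) (Fin n) ℝ}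
    (hM : IsHurwitz M) {z : ℝ → Fin n → ℝ}
    (hz : ∀ t ≥ (0 : ℝ), HasDerivAt z (M *ᵥ z t) t) :
    Tendsto z atTop (𝓝 0) :=
  (hM.tendsto_exp_smul_mulVec (z 0)).congr' <| by
    filter_upwards [eventually_ge_atTop 0] with t ht
    exact (eq_exp_smul_mulVec_of_hasDerivAt hz ht).symm

section Regulator

variable {ι κ τ : Type*} [Fintype ι] [Fintype κ] [Fintype τ]
  {A : Matrix ι ι ℝ} {B : Matrix ι κ ℝ} {D : Matrix ι τ ℝ} {E : Matrix τ τ ℝ}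
  {X : Matrix ι τ ℝ} {U L : Matrix κ τ ℝ} {K : Matrix κ ι ℝ}

theorem sub_mul_mul_eq_of_regulator (hreg : X * E = A * X + B * U + D) (hL : L = U + K * X) :
    (A - B * K) * X = X * E - (B * L + D) := by
  rw [hreg, hL, Matrix.sub_mul, Matrix.mul_add, ← Matrix.mul_assoc]
  abel

theorem hasDerivAt_sub_mulVec_of_regulator (hreg : X * E = A * X + B * U + D)
    (hL : L = U + K * X) {v : ℝ → τ → ℝ} {x : ℝ → ι → ℝ} {t : ℝ}
    (hv : HasDerivAt v (E *ᵥ v t) t)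
    (hx : HasDerivAt x (A *ᵥ x t + B *ᵥ (-(K *ᵥ x t) + L *ᵥ v t) + D *ᵥ v t) t) :
    HasDerivAt (fun s => x s - X *ᵥ v s) ((A - B * K) *ᵥ (x t - X *ᵥ v t)) t := by
  have hXv : HasDerivAt (fun s => X *ᵥ v s) (X *ᵥ (E *ᵥ v t)) t :=
    (Matrix.mulVecLin X).toContinuousLinearMap.hasFDerivAt.comp_hasDerivAt t hv
  refine (hx.sub hXv).congr_deriv ?_
  rw [Matrix.mulVec_sub, Matrix.mulVec_mulVec, Matrix.mulVec_mulVec,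
    sub_mul_mul_eq_of_regulator hreg hL]
  simp only [Matrix.sub_mulVec, Matrix.add_mulVec, Matrix.mulVec_add, Matrix.mulVec_neg,
    ← Matrix.mulVec_mulVec]
  abel

end Regulator

/-- If `(X, U)` solves the regulator equations and `A - BK` is Hurwitz, then the
control law `u = -Kx + Lv` with `L = U + KX` solves the output regulation problem:
along every closed-loop trajectory the tracking error `e = Cx + Fv` tends to `0`. -/
theorem statement0 {n m p q : ℕ}
    (A : Matrix (Fin n) (Fin n) ℝ) (B : Matrix (Fin n) (Fin m) ℝ)
    (D : Matrix (Fin n) (Fin q) ℝ) (C : Matrix (Fin p) (Fin n) ℝ)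
    (F : Matrix (Fin p) (Fin q) ℝ) (E : Matrix (Fin q) (Fin q) ℝ)
    (X : Matrix (Fin n) (Fin q) ℝ) (U : Matrix (Fin m) (Fin q) ℝ)
    (hreg1 : X * E = A * X + B * U + D) (hreg2 : C * X + F = 0)
    (K : Matrix (Fin m) (Fin n) ℝ) (hK : IsHurwitz (A - B * K))
    (L : Matrix (Fin m) (Fin q) ℝ) (hL : L = U + K * X)
    (v : ℝ → Fin q → ℝ) (x : ℝ → Fin n → ℝ)
    (hv : ∀ t ≥ (0 : ℝ), HasDerivAt v (E.mulVec (v t)) t)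
    (hx : ∀ t ≥ (0 : ℝ), HasDerivAt x
      (A.mulVec (x t) + B.mulVec (-(K.mulVec (x t)) + L.mulVec (v t)) + D.mulVec (v t)) t) :
    Tendsto (fun t => C.mulVec (x t) + F.mulVec (v t)) atTop (𝓝 0) := by
  have hdecay : Tendsto (fun t => x t - X *ᵥ v t) atTop (𝓝 0) :=
    hK.tendsto_of_hasDerivAt fun t ht =>
      hasDerivAt_sub_mulVec_of_regulator hreg1 hL (hv t ht) (hx t ht)
  have herror (t : ℝ) : C *ᵥ x t + F *ᵥ v t = C *ᵥ (x t - X *ᵥ v t) := by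
    rw [Matrix.mulVec_sub, Matrix.mulVec_mulVec, eq_neg_of_add_eq_zero_left hreg2,
      Matrix.neg_mulVec, sub_neg_eq_add]
  simp_rw [herror]
  simpa [Function.comp_def] using
    ((Matrix.mulVecLin C).continuous_of_finiteDimensional.tendsto 0).comp hdecay
end

section
/- Let A ∈ ℝ^{n×n}, B ∈ ℝ^{n×m}, D ∈ ℝ^{n×q}, C ∈ ℝ^{p×n} of full row rank, F ∈ ℝ^{p×q}, E ∈ ℝ^{q×q}, and h = (n−p)q. Let X_1 ∈ ℝ^{n×q} satisfy C X_1 + F = 0 and let X_2, …, X_{h+1} form a basis of {X ∈ ℝ^{n×q} : CX = 0}. Define the Sylvester map S(X) = XE − AX. Let P ∈ ℝ^{n×n} be symmetric positive definite, R ∈ ℝ^{m×m} symmetric positive definite, and K' = R^{−1} B^T P (so that P^{−1} K'^T R = B). Define 𝒜 = [𝒜_1, 𝒜_2] with 𝒜_1 = [[vec(S(X_2)), …, vec(S(X_{h+1}))]; [vec(X_2), …, vec(X_{h+1})]], 𝒜_2 = [[0, −I_q ⊗ (P^{−1} K'^T R)]; [−I_{nq}, 0]], and b = [vec(D − S(X_1));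 −vec(X_1)]. Then a vector χ = (α_2, …, α_{h+1}, vec(X)^T, vec(U)^T)^T satisfies 𝒜 χ = b if and only if X = X_1 + Σ_{i=2}^{h+1} α_i X_i and S(X) = BU + D; consequently every such χ yields a pair (X, U) solving the regulator equations XE = AX + BU + D, 0 = CX + F. -/
/-!
Since `P` and `R` are symmetric and invertible, `P⁻¹ K'ᵀ R = B`, so `𝒜` only involves `B`.
Under vectorisation `(I_q ⊗ B) vec U = vec (B U)`, and by linearity of the Sylvester map `S`
the first block column of `𝒜` sends `α` to `vec S(Y)` resp. `vec Y` for `Y = Σ αᵢ Xᵢ`. The two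
block rows of `𝒜 χ = b` thus read `S(Y) − B U = D − S(X₁)` and `Y − X = −X₁`, i.e.
`X = X₁ + Y` and `S(X) = S(X₁) + S(Y) = B U + D`. Finally `C Y = 0` because `Y` lies in
the span of the `Xᵢ`, so `C X + F = C X₁ + F = 0`.
-/

open Matrix

open scoped Kronecker BigOperators

def vecM {a b : ℕ} (M : Matrix (Fin a) (Fin b) ℝ) : Fin b × Fin a → ℝ :=
  fun jc => M jc.2 jc.1

theorem vecM_eq_vec {a b : ℕ} (M : Matrix (Fin a) (Fin b) ℝ) : vecM M = M.vec := rfl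

namespace Matrix

variable {K ι n m q : Type*}

theorem nonsing_inv_mul_transpose_gain_mul [CommRing K] [Fintype n] [Fintype m] [DecidableEq n]
    [DecidableEq m] {P : Matrix n n K} {R : Matrix m m K} (hP : P.IsSymm) (hR : R.IsSymm)
    (hPu : IsUnit P.det) (hRu : IsUnit R.det) (B : Matrix n m K) :
    P⁻¹ * (R⁻¹ * Bᵀ * P)ᵀ * R = B := by
  rw [transpose_mul, transpose_mul, transpose_nonsing_inv, hP.eq, hR.eq, transpose_transpose,
    ← Matrix.mul_assoc, nonsing_inv_mul _ hPu, Matrix.one_mul, Matrix.mul_assoc,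
    nonsing_inv_mul _ hRu, Matrix.mul_one]

variable (K) in
def sylvester [CommRing K] [Fintype n] [Fintype q] (A : Matrix n n K) (E : Matrix q q K) :
    Matrix n q K →ₗ[K] Matrix n q K where
  toFun X := X * E - A * X
  map_add' X Y := by rw [Matrix.add_mul, Matrix.mul_add]; abel
  map_smul' c X := by rw [Matrix.smul_mul, Matrix.mul_smul, smul_sub]; rfl

@[simp]
theorem sylvester_apply [CommRing K] [Fintype n] [Fintype q] (A : Matrix n n K)
    (E : Matrix q q K) (X : Matrix n q K) : sylvester K A E X = X * E - A * X := rfl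

theorem of_vec_mulVec [Fintype ι] [NonUnitalCommSemiring K] (M : ι → Matrix n q K)
    (α : ι → K) : (of fun r i => vec (M i) r) *ᵥ α = vec (∑ i, α i • M i) := by
  ext r
  simp [mulVec, dotProduct, Matrix.sum_apply, mul_comm]

theorem regulatorSystem_mulVec [CommRing K] [Fintype ι] [Fintype n] [Fintype m] [Fintype q]
    [DecidableEq n] [DecidableEq q] (A : Matrix n n K) (B : Matrix n m K) (E : Matrix q q K)
    (Xb : ι → Matrix n q K)
    (α : ι → K) (X : Matrix n q K) (U : Matrix m q K) :
    fromBlocks (of fun r i => vec (sylvester K A E (Xb i)) r)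
        (fromCols 0 (-((1 : Matrix q q K) ⊗ₖ B))) (of fun r i => vec (Xb i) r) (fromCols (-1) 0) *ᵥ
      Sum.elim α (Sum.elim (vec X) (vec U)) =
    Sum.elim (vec (sylvester K A E (∑ i, α i • Xb i) - B * U))
      (vec (∑ i, α i • Xb i) - vec X) := by
  rw [fromBlocks_mulVec, Sum.elim_comp_inl, Sum.elim_comp_inr, fromCols_mulVec_sumElim,
    fromCols_mulVec_sumElim, of_vec_mulVec, of_vec_mulVec, map_sum]
  simp only [map_smul, zero_mulVec, neg_mulVec, one_mulVec, ← vec_mul_eq_mulVec, zero_add,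
    add_zero, vec_add, vec_neg, sub_eq_add_neg]

end Matrix

theorem sub_eq_sub_and_sub_eq_neg_iff {V W : Type*} [AddCommGroup V] [AddCommGroup W]
    (S : V →+ W) (X X₁ Y : V) (u d : W) :
    S Y - u = d - S X₁ ∧ Y - X = -X₁ ↔ X = X₁ + Y ∧ S X = u + d := by
  have hX : Y - X = -X₁ ↔ X = X₁ + Y := by
    rw [sub_eq_iff_eq_add, eq_neg_add_iff_add_eq, eq_comm]
  rw [hX, and_comm]
  refine and_congr_right fun h => ?_
  rw [h, map_add, sub_eq_sub_iff_add_eq_add, add_comm (S Y), add_comm d]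

theorem statement5_general {n m p q : ℕ}
    (A : Matrix (Fin n) (Fin n) ℝ) (B : Matrix (Fin n) (Fin m) ℝ)
    (D : Matrix (Fin n) (Fin q) ℝ) (C : Matrix (Fin p) (Fin n) ℝ)
    (F : Matrix (Fin p) (Fin q) ℝ) (E : Matrix (Fin q) (Fin q) ℝ)
    (X1 : Matrix (Fin n) (Fin q) ℝ) (hX1 : C * X1 + F = 0)
    (Xb : Fin ((n - p) * q) → Matrix (Fin n) (Fin q) ℝ)
    (hXbspan : (Submodule.span ℝ (Set.range Xb) : Set (Matrix (Fin n) (Fin q) ℝ)) =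
      {Y : Matrix (Fin n) (Fin q) ℝ | C * Y = 0})
    (P : Matrix (Fin n) (Fin n) ℝ) (hP : P.PosDef)
    (R : Matrix (Fin m) (Fin m) ℝ) (hR : R.PosDef)
    (K' : Matrix (Fin m) (Fin n) ℝ) (hK' : K' = R⁻¹ * Bᵀ * P)
    (α : Fin ((n - p) * q) → ℝ)
    (X : Matrix (Fin n) (Fin q) ℝ) (U : Matrix (Fin m) (Fin q) ℝ)
    (𝒜 : Matrix ((Fin q × Fin n) ⊕ (Fin q × Fin n))
      (Fin ((n - p) * q) ⊕ ((Fin q × Fin n) ⊕ (Fin q × Fin m))) ℝ)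
    (h𝒜 : 𝒜 = Matrix.fromBlocks
      (Matrix.of fun r i => vecM (Xb i * E - A * Xb i) r)
      (Matrix.fromCols (0 : Matrix (Fin q × Fin n) (Fin q × Fin n) ℝ)
        (-((1 : Matrix (Fin q) (Fin q) ℝ) ⊗ₖ (P⁻¹ * K'ᵀ * R))))
      (Matrix.of fun r i => vecM (Xb i) r)
      (Matrix.fromCols (-1 : Matrix (Fin q × Fin n) (Fin q × Fin n) ℝ)
        (0 : Matrix (Fin q × Fin n) (Fin q × Fin m) ℝ)))
    (χ : Fin ((n - p) * q) ⊕ ((Fin q × Fin n) ⊕ (Fin q × Fin m)) → ℝ)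
    (hχ : χ = Sum.elim α (Sum.elim (vecM X) (vecM U)))
    (bv : (Fin q × Fin n) ⊕ (Fin q × Fin n) → ℝ)
    (hbv : bv = Sum.elim (vecM (D - (X1 * E - A * X1))) (-(vecM X1))) :
    (𝒜 *ᵥ χ = bv ↔
      (X = X1 + ∑ i, α i • Xb i ∧ X * E - A * X = B * U + D)) ∧
    (𝒜 *ᵥ χ = bv → (X * E = A * X + B * U + D ∧ C * X + F = 0)) := by
  have hB : P⁻¹ * K'ᵀ * R = B := hK' ▸ nonsing_inv_mul_transpose_gain_mul
    (isHermitian_iff_isSymm.mp hP.isHermitian) (isHermitian_iff_isSymm.mp hR.isHermitian)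
    ((isUnit_iff_isUnit_det P).mp hP.isUnit) ((isUnit_iff_isUnit_det R).mp hR.isUnit) B
  have hsolve : 𝒜 *ᵥ χ = bv ↔ X = X1 + ∑ i, α i • Xb i ∧ X * E - A * X = B * U + D := by
    simp only [h𝒜, hχ, hbv, hB, vecM_eq_vec, ← vec_neg, ← sylvester_apply A E]
    rw [regulatorSystem_mulVec, Sum.elim_eq_iff, ← vec_sub, vec_inj, vec_inj]
    exact sub_eq_sub_and_sub_eq_neg_iff (sylvester ℝ A E).toAddMonoidHom X X1 _ (B * U) D
  refine ⟨hsolve, fun h => ?_⟩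
  obtain ⟨hX, hS⟩ := hsolve.mp h
  have hCY : C * ∑ i, α i • Xb i = 0 :=
    hXbspan.subset <| Submodule.sum_mem _ fun i _ ↦ Submodule.smul_mem _ _ <|
      Submodule.subset_span ⟨i, rfl⟩
  exact ⟨by rw [add_assoc, ← hS, add_sub_cancel], by rw [hX, Matrix.mul_add, hCY, add_zero, hX1]⟩

/-- The reformulation `𝒜 χ = b` of the regulator equations: with
`𝒜₁ = [[vec S(X₂), …]; [vec X₂, …]]`, `𝒜₂ = [[0, −I_q ⊗ (P⁻¹K'ᵀR)]; [−I_{nq}, 0]]`,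
`b = [vec(D − S(X₁)); −vec X₁]` and `K' = R⁻¹BᵀP` (so `P⁻¹K'ᵀR = B`), a vector
`χ = (α, vec X, vec U)` satisfies `𝒜 χ = b` iff `X = X₁ + Σ αᵢ Xᵢ` and
`S(X) = XE − AX = BU + D`; consequently every such `χ` yields a solution of the
regulator equations. -/
theorem statement5 {n m p q : ℕ}
    (A : Matrix (Fin n) (Fin n) ℝ) (B : Matrix (Fin n) (Fin m) ℝ)
    (D : Matrix (Fin n) (Fin q) ℝ) (C : Matrix (Fin p) (Fin n) ℝ)
    (F : Matrix (Fin p) (Fin q) ℝ) (E : Matrix (Fin q) (Fin q) ℝ)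
    (hC : C.rank = p)
    (X1 : Matrix (Fin n) (Fin q) ℝ) (hX1 : C * X1 + F = 0)
    (Xb : Fin ((n - p) * q) → Matrix (Fin n) (Fin q) ℝ)
    (hXbLI : LinearIndependent ℝ Xb)
    (hXbspan : (Submodule.span ℝ (Set.range Xb) : Set (Matrix (Fin n) (Fin q) ℝ)) =
      {Y : Matrix (Fin n) (Fin q) ℝ | C * Y = 0})
    (P : Matrix (Fin n) (Fin n) ℝ) (hPsym : Pᵀ = P) (hP : P.PosDef)
    (R : Matrix (Fin m) (Fin m) ℝ) (hRsym : Rᵀ = R) (hR : R.PosDef)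
    (K' : Matrix (Fin m) (Fin n) ℝ) (hK' : K' = R⁻¹ * Bᵀ * P)
    (α : Fin ((n - p) * q) → ℝ)
    (X : Matrix (Fin n) (Fin q) ℝ) (U : Matrix (Fin m) (Fin q) ℝ)
    (𝒜 : Matrix ((Fin q × Fin n) ⊕ (Fin q × Fin n))
      (Fin ((n - p) * q) ⊕ ((Fin q × Fin n) ⊕ (Fin q × Fin m))) ℝ)
    (h𝒜 : 𝒜 = Matrix.fromBlocks
      (Matrix.of fun r i => vecM (Xb i * E - A * Xb i) r)
      (Matrix.fromCols (0 : Matrix (Fin q × Fin n) (Fin q × Fin n) ℝ)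
        (-((1 : Matrix (Fin q) (Fin q) ℝ) ⊗ₖ (P⁻¹ * K'ᵀ * R))))
      (Matrix.of fun r i => vecM (Xb i) r)
      (Matrix.fromCols (-1 : Matrix (Fin q × Fin n) (Fin q × Fin n) ℝ)
        (0 : Matrix (Fin q × Fin n) (Fin q × Fin m) ℝ)))
    (χ : Fin ((n - p) * q) ⊕ ((Fin q × Fin n) ⊕ (Fin q × Fin m)) → ℝ)
    (hχ : χ = Sum.elim α (Sum.elim (vecM X) (vecM U)))
    (bv : (Fin q × Fin n) ⊕ (Fin q × Fin n) → ℝ)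
    (hbv : bv = Sum.elim (vecM (D - (X1 * E - A * X1))) (-(vecM X1))) :
    (𝒜 *ᵥ χ = bv ↔
      (X = X1 + ∑ i, α i • Xb i ∧ X * E - A * X = B * U + D)) ∧
    (𝒜 *ᵥ χ = bv → (X * E = A * X + B * U + D ∧ C * X + F = 0)) :=
  statement5_general A B D C F E X1 hX1 Xb hXbspan P hP R hR K' hK' α X U 𝒜 h𝒜 χ hχ bv hbv
end

section
/- Let A ∈ ℝ^{n×n}, B ∈ ℝ^{n×m}, D ∈ ℝ^{n×q}, C ∈ ℝ^{p×n}, E ∈ ℝ^{q×q}, Q ∈ ℝ^{p×p} symmetric positive semidefinite, and R ∈ ℝ^{m×m} symmetric positive definite. Let K ∈ ℝ^{m×n}, set A_K = A − BK, and suppose P ∈ ℝ^{n×n} is symmetric and solves the Lyapunov equation A_K^T P + P A_K + C^T Q C + K^T R K = 0; let K' = R^{−1} B^T P. Fix X_i ∈ ℝ^{n×q} and let S(X_i) = X_i E − A X_i. Let v : ℝ → ℝ^q and x : ℝ → ℝ^n be differentiable and u : ℝ → ℝ^m be continuous with v' = Ev and x' = Ax + Bu + Dv, and set x̄(τ) =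 x(τ) − X_i v(τ). Then for all t ∈ ℝ and δt > 0: x̄(t+δt)^T P x̄(t+δt) − x̄(t)^T P x̄(t) = ∫_t^{t+δt} [ −x̄(τ)^T (C^T Q C + K^T R K) x̄(τ) + 2 (u(τ) + K x̄(τ))^T R K' x̄(τ) + 2 v(τ)^T (D − S(X_i))^T P x̄(τ) ] dτ. -/
open Matrix intervalIntegral

/-!
Along the trajectory, `x̄' = A_K x̄ + B (K x̄ + u) + (D - S(Xᵢ)) v`. Differentiating `|x̄|_P`, the
Lyapunov equation turns the `A_K` part into `-|x̄|_{CᵀQC + KᵀRK}`, and `R K' = Bᵀ P` rewrites the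
`B` part; the identity is then the fundamental theorem of calculus for a continuous integrand.
-/

section Calculus

variable {𝕜 : Type*} [NontriviallyNormedField 𝕜] {ι κ : Type*} [Fintype κ]
  {f g : 𝕜 → κ → 𝕜} {f' g' : κ → 𝕜} {t : 𝕜}

theorem HasDerivAt.matrix_mulVec (M : Matrix ι κ 𝕜) (hf : HasDerivAt f f' t) :
    HasDerivAt (fun s => M *ᵥ f s) (M *ᵥ f') t := by
  rw [hasDerivAt_pi] at hf ⊢
  exact fun i => HasDerivAt.fun_sum fun j _ => (hf j).const_mul (M i j)

theorem HasDerivAt.dotProduct (hf : HasDerivAt f f' t) (hg : HasDerivAt g g' t) :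
    HasDerivAt (fun s => f s ⬝ᵥ g s) (f' ⬝ᵥ g t + f t ⬝ᵥ g') t := by
  simp only [_root_.dotProduct, ← Finset.sum_add_distrib]
  exact HasDerivAt.fun_sum fun i _ => (hasDerivAt_pi.1 hf i).mul (hasDerivAt_pi.1 hg i)

theorem HasDerivAt.dotProduct_mulVec_self {P : Matrix κ κ 𝕜} (hP : Pᵀ = P)
    (hf : HasDerivAt f f' t) :
    HasDerivAt (fun s => f s ⬝ᵥ P *ᵥ f s) (2 * (f' ⬝ᵥ P *ᵥ f t)) t := by
  convert hf.dotProduct (hf.matrix_mulVec P) using 1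
  rw [← dotProduct_transpose_mulVec, hP]
  ring

end Calculus

theorem mulVec_dotProduct_eq_dotProduct_transpose_mulVec {R m n : Type*} [CommSemiring R]
    [Fintype m] [Fintype n] (M : Matrix m n R) (x : n → R) (y : m → R) :
    M *ᵥ x ⬝ᵥ y = x ⬝ᵥ Mᵀ *ᵥ y := by
  rw [dotProduct_transpose_mulVec, dotProduct_comm]

theorem two_mul_mulVec_dotProduct_mulVec_of_lyapunov {R n : Type*} [CommRing R] [Fintype n]
    {AK P W : Matrix n n R} (hP : Pᵀ = P) (hLyap : AKᵀ * P + P * AK + W = 0) (y : n → R) :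
    2 * (AK *ᵥ y ⬝ᵥ P *ᵥ y) = -(y ⬝ᵥ W *ᵥ y) := by
  rw [eq_neg_of_add_eq_zero_right hLyap, neg_mulVec, dotProduct_neg, neg_neg, add_mulVec,
    dotProduct_add, ← mulVec_mulVec, ← mulVec_mulVec, dotProduct_transpose_mulVec,
    dotProduct_comm (P *ᵥ y), ← dotProduct_transpose_mulVec P (AK *ᵥ y) y, hP]
  ring

theorem hasDerivAt_trackingError {𝕜 : Type*} [NontriviallyNormedField 𝕜]
    {ι μ ν : Type*} [Fintype ι] [Fintype μ] [Fintype ν]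
    {A : Matrix ι ι 𝕜} {B : Matrix ι μ 𝕜} {D : Matrix ι ν 𝕜} {E : Matrix ν ν 𝕜}
    (K : Matrix μ ι 𝕜) (X : Matrix ι ν 𝕜) {x : 𝕜 → ι → 𝕜} {u : 𝕜 → μ → 𝕜} {v : 𝕜 → ν → 𝕜}
    {t : 𝕜} (hx : HasDerivAt x (A *ᵥ x t + B *ᵥ u t + D *ᵥ v t) t)
    (hv : HasDerivAt v (E *ᵥ v t) t) :
    HasDerivAt (fun s => x s - X *ᵥ v s)
      ((A - B * K) *ᵥ (x t - X *ᵥ v t) + B *ᵥ (u t + K *ᵥ (x t - X *ᵥ v t))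
        + (D - (X * E - A * X)) *ᵥ v t) t := by
  refine (hx.sub (hv.matrix_mulVec X)).congr_deriv ?_
  simp only [sub_mulVec, mulVec_add, mulVec_sub, ← mulVec_mulVec]
  abel

theorem statement6_general {n m p q : ℕ}
    (A : Matrix (Fin n) (Fin n) ℝ) (B : Matrix (Fin n) (Fin m) ℝ)
    (D : Matrix (Fin n) (Fin q) ℝ) (C : Matrix (Fin p) (Fin n) ℝ)
    (E : Matrix (Fin q) (Fin q) ℝ)
    (Q : Matrix (Fin p) (Fin p) ℝ)
    (R : Matrix (Fin m) (Fin m) ℝ) (hR : R.PosDef)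
    (K : Matrix (Fin m) (Fin n) ℝ)
    (AK : Matrix (Fin n) (Fin n) ℝ) (hAK : AK = A - B * K)
    (P : Matrix (Fin n) (Fin n) ℝ) (hPsym : Pᵀ = P)
    (hLyap : AKᵀ * P + P * AK + Cᵀ * Q * C + Kᵀ * R * K = 0)
    (K' : Matrix (Fin m) (Fin n) ℝ) (hK' : K' = R⁻¹ * Bᵀ * P)
    (Xi : Matrix (Fin n) (Fin q) ℝ)
    (SXi : Matrix (Fin n) (Fin q) ℝ) (hSXi : SXi = Xi * E - A * Xi)
    (v : ℝ → Fin q → ℝ) (x : ℝ → Fin n → ℝ) (u : ℝ → Fin m → ℝ)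
    (hu : Continuous u)
    (hv : ∀ τ : ℝ, HasDerivAt v (E.mulVec (v τ)) τ)
    (hx : ∀ τ : ℝ, HasDerivAt x
      (A.mulVec (x τ) + B.mulVec (u τ) + D.mulVec (v τ)) τ)
    (xbar : ℝ → Fin n → ℝ) (hxbar : ∀ τ, xbar τ = x τ - Xi.mulVec (v τ)) :
    ∀ (t δt : ℝ), 0 < δt →
      xbar (t + δt) ⬝ᵥ P.mulVec (xbar (t + δt)) - xbar t ⬝ᵥ P.mulVec (xbar t) =
      ∫ τ in t..(t + δt),
        (-(xbar τ ⬝ᵥ (Cᵀ * Q * C + Kᵀ * R * K).mulVec (xbar τ))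
          + 2 * ((u τ + K.mulVec (xbar τ)) ⬝ᵥ (R * K').mulVec (xbar τ))
          + 2 * (v τ ⬝ᵥ ((D - SXi)ᵀ * P).mulVec (xbar τ))) := by
  intro t δt _
  have hRK' : R * K' = Bᵀ * P := by
    rw [hK', ← Matrix.mul_assoc, ← Matrix.mul_assoc, mul_nonsing_inv R hR.det_pos.ne'.isUnit,
      Matrix.one_mul]
  obtain rfl : xbar = fun τ => x τ - Xi *ᵥ v τ := funext hxbar
  subst hAK hSXi
  have hvc : Continuous v := Differentiable.continuous fun τ => (hv τ).differentiableAt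
  have hxc : Continuous x := Differentiable.continuous fun τ => (hx τ).differentiableAt
  refine (integral_eq_sub_of_hasDerivAt
    (f := fun s => (x s - Xi *ᵥ v s) ⬝ᵥ P *ᵥ (x s - Xi *ᵥ v s))
    (fun τ _ => ?_) (Continuous.intervalIntegrable (by fun_prop) _ _)).symm
  refine ((hasDerivAt_trackingError K Xi (hx τ) (hv τ)).dotProduct_mulVec_self hPsym).congr_deriv
    ?_
  rw [hRK', ← mulVec_mulVec, ← mulVec_mulVec, add_dotProduct, add_dotProduct, mul_add, mul_add,
    two_mul_mulVec_dotProduct_mulVec_of_lyapunov hPsym ((add_assoc _ _ _).symm.trans hLyap),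
    mulVec_dotProduct_eq_dotProduct_transpose_mulVec B,
    mulVec_dotProduct_eq_dotProduct_transpose_mulVec (D - _)]

/-- The integral reinforcement-learning identity: if `P` is symmetric and solves the
Lyapunov equation `A_Kᵀ P + P A_K + CᵀQC + KᵀRK = 0` with `A_K = A - BK`, and
`K' = R⁻¹BᵀP`, then along any trajectory of `x' = Ax + Bu + Dv`, `v' = Ev`, with
`x̄ = x - Xᵢ v` and `S(Xᵢ) = XᵢE - AXᵢ`,
`|x̄(t+δt)|_P - |x̄(t)|_P = ∫_t^{t+δt} [ -|x̄|_{CᵀQC+KᵀRK} + 2(u + Kx̄)ᵀRK'x̄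
  + 2vᵀ(D - S(Xᵢ))ᵀPx̄ ] dτ`. -/
theorem statement6 {n m p q : ℕ}
    (A : Matrix (Fin n) (Fin n) ℝ) (B : Matrix (Fin n) (Fin m) ℝ)
    (D : Matrix (Fin n) (Fin q) ℝ) (C : Matrix (Fin p) (Fin n) ℝ)
    (E : Matrix (Fin q) (Fin q) ℝ)
    (Q : Matrix (Fin p) (Fin p) ℝ) (hQsym : Qᵀ = Q) (hQ : Q.PosSemidef)
    (R : Matrix (Fin m) (Fin m) ℝ) (hRsym : Rᵀ = R) (hR : R.PosDef)
    (K : Matrix (Fin m) (Fin n) ℝ)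
    (AK : Matrix (Fin n) (Fin n) ℝ) (hAK : AK = A - B * K)
    (P : Matrix (Fin n) (Fin n) ℝ) (hPsym : Pᵀ = P)
    (hLyap : AKᵀ * P + P * AK + Cᵀ * Q * C + Kᵀ * R * K = 0)
    (K' : Matrix (Fin m) (Fin n) ℝ) (hK' : K' = R⁻¹ * Bᵀ * P)
    (Xi : Matrix (Fin n) (Fin q) ℝ)
    (SXi : Matrix (Fin n) (Fin q) ℝ) (hSXi : SXi = Xi * E - A * Xi)
    (v : ℝ → Fin q → ℝ) (x : ℝ → Fin n → ℝ) (u : ℝ → Fin m → ℝ)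
    (hu : Continuous u)
    (hv : ∀ τ : ℝ, HasDerivAt v (E.mulVec (v τ)) τ)
    (hx : ∀ τ : ℝ, HasDerivAt x
      (A.mulVec (x τ) + B.mulVec (u τ) + D.mulVec (v τ)) τ)
    (xbar : ℝ → Fin n → ℝ) (hxbar : ∀ τ, xbar τ = x τ - Xi.mulVec (v τ)) :
    ∀ (t δt : ℝ), 0 < δt →
      xbar (t + δt) ⬝ᵥ P.mulVec (xbar (t + δt)) - xbar t ⬝ᵥ P.mulVec (xbar t) =
      ∫ τ in t..(t + δt),
        (-(xbar τ ⬝ᵥ (Cᵀ * Q * C + Kᵀ * R * K).mulVec (xbar τ))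
          + 2 * ((u τ + K.mulVec (xbar τ)) ⬝ᵥ (R * K').mulVec (xbar τ))
          + 2 * (v τ ⬝ᵥ ((D - SXi)ᵀ * P).mulVec (xbar τ))) :=
  statement6_general A B D C E Q R hR K AK hAK P hPsym hLyap K' hK' Xi SXi hSXi v x u hu hv hx xbar
    hxbar
end

section
/- Let A ∈ ℝ^{n×n}, B ∈ ℝ^{n×m}, C ∈ ℝ^{p×n}, Q symmetric positive semidefinite with (A, √Q C) observable, R symmetric positive definite, and assume (A,B) is stabilizable. Let P* be the unique symmetric positive definite solution of A^T P + P A + C^T Q C − P B R^{−1} B^T P = 0 and K* = R^{−1} B^T P*. Let K_0 ∈ ℝ^{m×n} be any matrix such that A − BK_0 is Hurwitz, and for j = 0, 1, 2, … define P_j as the symmetric solution of (A − BK_j)^T P_j + P_j (A − BK_j) + C^T Q C + K_j^T R K_j = 0 and K_{j+1} = R^{−1} B^T P_j. Then for all j ∈ ℕ: (1) A − BK_j is Hurwitz; (2) P* ≤ P_{j+1} ≤ P_j in the Loewner order (i.e., P_j − P_{j+1} and P_{j+1} − P* are positive semidefinite); (3) K_j → K* and P_j → P* as j → ∞. -/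
/-!
Two facts about the Lyapunov equation `FᵀX + XF + M = 0` carry the argument. If `F` is Hurwitz
and `M ⪰ 0` then `X ⪰ 0`: the Cayley transform `T = (1 + F)(1 - F)⁻¹` has spectral radius `< 1`
and `X - TᵀXT = Sᵀ(2M)S` with `S = (1 - F)⁻¹`, so `X ⪰ (Tᵏ)ᵀXTᵏ → 0`. Conversely, if `X ≻ 0`
and no eigenvector of `F` lies in `ker M`, testing the equation against an eigenvector shows that
`F` is Hurwitz.

Completing the square shows that, among all gains, `R⁻¹BᵀP` minimises the residual of the
closed-loop Lyapunov equation at `P`, with defect `(K - R⁻¹BᵀP)ᵀR(K - R⁻¹BᵀP)`. Comparing residuals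
gives `P* ≤ P_{j+1} ≤ Pⱼ`; observability of `(A, √Q C)` turns `Pⱼ ≻ 0` into stability of the next
closed loop; and the antitone, bounded sequence `Pⱼ` converges to a solution of the Riccati
equation, which is squeezed onto `P*` from both sides.
-/

open Matrix Filter Topology

/-- The observability matrix `col(H, HA, …, HA^{n-1})` of the pair `(A, H)`. -/
noncomputable def obsMat {n p : ℕ} (A : Matrix (Fin n) (Fin n) ℝ)
    (H : Matrix (Fin p) (Fin n) ℝ) : Matrix (Fin n × Fin p) (Fin n) ℝ :=
  Matrix.of fun kr c => (H * A ^ (kr.1 : ℕ)) kr.2 c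

open Complex
open scoped ComplexOrder MatrixOrder NNReal

namespace Matrix

variable {ι κ ν : Type*}

theorem map_ofReal_mul [Fintype κ] (M : Matrix ι κ ℝ) (N : Matrix κ ν ℝ) :
    (M * N).map ofReal = M.map ofReal * N.map ofReal :=
  Matrix.map_mul (f := ofRealHom)

theorem map_ofReal_add (M N : Matrix ι κ ℝ) :
    (M + N).map ofReal = M.map ofReal + N.map ofReal :=
  Matrix.map_add _ ofReal_add M N

theorem map_ofReal_sub (M N : Matrix ι κ ℝ) :
    (M - N).map ofReal = M.map ofReal - N.map ofReal :=
  Matrix.map_sub _ ofReal_sub M N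

theorem map_ofReal_transpose (M : Matrix ι κ ℝ) : Mᵀ.map ofReal = (M.map ofReal)ᴴ := by
  ext i j
  simp

theorem map_ofReal_one [DecidableEq ι] : (1 : Matrix ι ι ℝ).map ofReal = 1 :=
  Matrix.map_one _ ofReal_zero ofReal_one

theorem map_ofReal_pow [Fintype ι] [DecidableEq ι] (M : Matrix ι ι ℝ) (k : ℕ) :
    (M ^ k).map ofReal = M.map ofReal ^ k :=
  map_pow (ofRealHom.mapMatrix) M k

theorem det_map_ofReal [Fintype ι] [DecidableEq ι] (M : Matrix ι ι ℝ) :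
    (M.map ofReal).det = M.det :=
  (ofRealHom.map_det M).symm

theorem PosSemidef.map_ofReal [Fintype ι] {M : Matrix ι ι ℝ} (hM : M.PosSemidef) :
    (M.map ofReal).PosSemidef := by
  classical
  obtain ⟨G, rfl⟩ := CStarAlgebra.nonneg_iff_eq_star_mul_self.mp hM.nonneg
  rw [star_eq_conjTranspose, conjTranspose_eq_transpose_of_trivial, map_ofReal_mul,
    map_ofReal_transpose]
  exact posSemidef_conjTranspose_mul_self _

theorem PosDef.map_ofReal [Fintype ι] [DecidableEq ι] {M : Matrix ι ι ℝ} (hM : M.PosDef) :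
    (M.map ofReal).PosDef := by
  rw [hM.posSemidef.map_ofReal.posDef_iff_det_ne_zero, det_map_ofReal]
  exact ofReal_ne_zero.mpr hM.det_pos.ne'

theorem PosDef.transpose_eq_self [Fintype ι] {M : Matrix ι ι ℝ}
    (hM : M.PosDef) : Mᵀ = M :=
  (isHermitian_iff_isSymm.1 hM.isHermitian).eq

theorem posSemidef_transpose_mul_self [Fintype ι] [Fintype κ] (H : Matrix κ ι ℝ) :
    (Hᵀ * H).PosSemidef := by
  simpa only [conjTranspose_eq_transpose_of_trivial] using posSemidef_conjTranspose_mul_self H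

theorem PosSemidef.transpose_mul_mul_same [Fintype ι] [Fintype κ]
    {R : Matrix κ κ ℝ} (hR : R.PosSemidef) (K : Matrix κ ι ℝ) : (Kᵀ * R * K).PosSemidef := by
  simpa only [conjTranspose_eq_transpose_of_trivial] using hR.conjTranspose_mul_mul_same K

theorem mem_spectrum_iff_exists_mulVec_eq_smul {K : Type*} [Field K] [Fintype ι] [DecidableEq ι]
    (M : Matrix ι ι K) (μ : K) :
    μ ∈ spectrum K M ↔ ∃ v ≠ 0, M *ᵥ v = μ • v := by
  rw [spectrum.mem_iff, isUnit_iff_isUnit_det, isUnit_iff_ne_zero, not_ne_iff,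
    ← exists_mulVec_eq_zero_iff]
  simp only [sub_mulVec, Algebra.algebraMap_eq_smul_one, smul_mulVec, one_mulVec,
    sub_eq_zero, eq_comm]

theorem star_dotProduct_lyapunov_mulVec_of_mulVec_eq_smul [Fintype ι]
    {F : Matrix ι ι ℂ} (X : Matrix ι ι ℂ) {v : ι → ℂ} {μ : ℂ} (hv : F *ᵥ v = μ • v) :
    star v ⬝ᵥ (Fᴴ * X + X * F) *ᵥ v = (2 * μ.re : ℝ) * (star v ⬝ᵥ X *ᵥ v) := by
  rw [add_mulVec, dotProduct_add, ← mulVec_mulVec, ← mulVec_mulVec, dotProduct_mulVec (star v),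
    ← star_mulVec, hv, mulVec_smul, star_smul, smul_dotProduct, dotProduct_smul, smul_eq_mul,
    smul_eq_mul, ← add_mul, add_comm, Complex.star_def, Complex.add_conj]

theorem rank_lt_card_of_mulVec_eq_zero {K : Type*} [Fintype ι] [Fintype κ] [Field K]
    {O : Matrix κ ι K} {x : ι → K} (hx : x ≠ 0) (h : O *ᵥ x = 0) :
    O.rank < Fintype.card ι := by
  have hker : 0 < Module.finrank K (LinearMap.ker O.mulVecLin) :=
    Module.finrank_pos_iff_exists_ne_zero.mpr ⟨⟨x, h⟩, fun h0 => hx (congrArg Subtype.val h0)⟩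
  have := LinearMap.finrank_range_add_finrank_ker O.mulVecLin
  rw [Module.finrank_fintype_fun_eq_card] at this
  change Module.finrank K (LinearMap.range O.mulVecLin) < _
  omega

theorem rank_lt_card_of_map_ofReal_mulVec_eq_zero [Fintype ι] [Fintype κ]
    {O : Matrix κ ι ℝ} {v : ι → ℂ} (hv : v ≠ 0) (h : O.map ofReal *ᵥ v = 0) :
    O.rank < Fintype.card ι := by
  have hre : O *ᵥ (fun i => (v i).re) = 0 := by
    ext i; simpa [mulVec, dotProduct, Complex.re_sum] using congrArg re (congrFun h i)
  have him : O *ᵥ (fun i => (v i).im) = 0 := by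
    ext i; simpa [mulVec, dotProduct, Complex.im_sum] using congrArg im (congrFun h i)
  by_cases hv' : (fun i => (v i).re) = 0
  · refine rank_lt_card_of_mulVec_eq_zero (fun him0 => hv ?_) him
    ext i
    exact Complex.ext (congrFun hv' i) (congrFun him0 i)
  · exact rank_lt_card_of_mulVec_eq_zero hv' hre

theorem PosSemidef.mulVec_eq_zero_of_add_mulVec_eq_zero {𝕜 : Type*} [RCLike 𝕜] [Fintype ι]
    {A B : Matrix ι ι 𝕜} (hA : A.PosSemidef) (hB : B.PosSemidef) {v : ι → 𝕜}
    (h : (A + B) *ᵥ v = 0) :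
    A *ᵥ v = 0 := by
  have hsum : star v ⬝ᵥ A *ᵥ v + star v ⬝ᵥ B *ᵥ v = 0 := by
    rw [← dotProduct_add, ← add_mulVec, h, dotProduct_zero]
  exact (hA.dotProduct_mulVec_zero_iff v).1 ((add_eq_zero_iff_of_nonneg
    (hA.dotProduct_mulVec_nonneg v) (hB.dotProduct_mulVec_nonneg v)).1 hsum).1

theorem PosDef.mulVec_eq_zero_of_conjTranspose_mul_mul_mulVec_eq_zero {𝕜 : Type*} [RCLike 𝕜]
    [Fintype ι] [Fintype κ] {R : Matrix κ κ 𝕜} (hR : R.PosDef) {K : Matrix κ ι 𝕜} {v : ι → 𝕜}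
    (h : (Kᴴ * R * K) *ᵥ v = 0) :
    K *ᵥ v = 0 := by
  by_contra hK
  have := hR.dotProduct_mulVec_pos hK
  rw [star_mulVec, ← dotProduct_mulVec, mulVec_mulVec, mulVec_mulVec, h,
    dotProduct_zero] at this
  exact this.false

theorem isClosed_setOf_posSemidef [Fintype ι] : IsClosed {M : Matrix ι ι ℝ | M.PosSemidef} := by
  simp only [posSemidef_iff_dotProduct_mulVec, IsHermitian, Set.ofPred_and, Set.ofPred_forall]
  exact (isClosed_eq continuous_id.matrix_conjTranspose continuous_id).inter
    (isClosed_iInter fun x => isClosed_le continuous_const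
      (continuous_const.dotProduct (continuous_id.matrix_mulVec continuous_const)))

theorem isClosed_Ici [Fintype ι] (L : Matrix ι ι ℝ) : IsClosed (Set.Ici L) :=
  isClosed_setOf_posSemidef.preimage (continuous_id.sub continuous_const)

theorem posSemidef_of_tendsto_pow [Fintype ι] [DecidableEq ι] {X T : Matrix ι ι ℝ}
    (hT : Tendsto (fun k : ℕ => T ^ k) atTop (𝓝 0)) (hX : (X - Tᵀ * X * T).PosSemidef) :
    X.PosSemidef := by
  have hk : ∀ k : ℕ, (X - (T ^ k)ᵀ * X * T ^ k).PosSemidef := by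
    intro k
    induction k with
    | zero => simpa using PosSemidef.zero
    | succ k ih =>
      have : X - (T ^ (k + 1))ᵀ * X * T ^ (k + 1)
          = (X - Tᵀ * X * T) + Tᵀ * (X - (T ^ k)ᵀ * X * T ^ k) * T := by
        rw [pow_succ, transpose_mul]
        noncomm_ring
      exact this ▸ hX.add (ih.transpose_mul_mul_same T)
  have hc : Continuous fun M : Matrix ι ι ℝ => X - Mᵀ * X * M :=
    continuous_const.sub ((continuous_id.matrix_transpose.matrix_mul continuous_const).matrix_mul
      continuous_id)
  have hlim := (hc.tendsto 0).comp hT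
  simp only [transpose_zero, zero_mul, sub_zero] at hlim
  exact isClosed_setOf_posSemidef.mem_of_tendsto hlim (Eventually.of_forall hk)

theorem sub_cayley_transpose_mul_mul_cayley [Fintype ι] [DecidableEq ι] {F X M : Matrix ι ι ℝ}
    (hF : IsUnit (1 - F).det) (h : Fᵀ * X + X * F + M = 0) :
    X - ((1 + F) * (1 - F)⁻¹)ᵀ * X * ((1 + F) * (1 - F)⁻¹)
      = (1 - F)⁻¹ᵀ * (M + M) * (1 - F)⁻¹ := by
  set S := (1 - F)⁻¹
  have hS : (1 - F) * S = 1 := mul_nonsing_inv _ hF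
  have hSt : Sᵀ * (1 - F)ᵀ = 1 := by rw [← transpose_mul, hS, transpose_one]
  have hM : M = -(Fᵀ * X + X * F) := eq_neg_of_add_eq_zero_right h
  calc X - ((1 + F) * S)ᵀ * X * ((1 + F) * S)
      = (Sᵀ * (1 - F)ᵀ) * X * ((1 - F) * S) - ((1 + F) * S)ᵀ * X * ((1 + F) * S) := by
        rw [hSt, hS, one_mul, mul_one]
    _ = Sᵀ * (M + M) * S := by
        rw [hM]
        simp only [transpose_mul, transpose_add, transpose_sub, transpose_one]
        noncomm_ring

theorem dotProduct_mulVec_le_of_le [Fintype ι] {A B : Matrix ι ι ℝ} (h : A ≤ B) (x : ι → ℝ) :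
    x ⬝ᵥ A *ᵥ x ≤ x ⬝ᵥ B *ᵥ x := by
  have := (le_iff.1 h).dotProduct_mulVec_nonneg x
  rwa [star_trivial, sub_mulVec, dotProduct_sub, sub_nonneg] at this

theorem exists_tendsto_of_antitone_of_le [Fintype ι] {P : ℕ → Matrix ι ι ℝ} {L : Matrix ι ι ℝ}
    (hP : Antitone P) (hL : ∀ j, L ≤ P j) : ∃ P', Tendsto P atTop (𝓝 P') := by
  classical
  have hform : ∀ x : ι → ℝ, ∃ c, Tendsto (fun j => x ⬝ᵥ P j *ᵥ x) atTop (𝓝 c) := fun x =>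
    ⟨_, tendsto_atTop_ciInf (fun _ _ hij => dotProduct_mulVec_le_of_le (hP hij) x)
      ⟨x ⬝ᵥ L *ᵥ x, by rintro _ ⟨j, rfl⟩; exact dotProduct_mulVec_le_of_le (hL j) x⟩⟩
  choose c hc using hform
  -- `P 0 - P j` is symmetric, so polarization recovers `P j` up to the skew part of `P 0`
  have hpol : ∀ j i k, P j i k = ((Pi.single i 1 + Pi.single k 1) ⬝ᵥ P j *ᵥ
      (Pi.single i 1 + Pi.single k 1) - Pi.single i 1 ⬝ᵥ P j *ᵥ Pi.single i 1
      - Pi.single k 1 ⬝ᵥ P j *ᵥ Pi.single k 1 + (P 0 i k - P 0 k i)) / 2 := by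
    intro j i k
    have hsymm := (hP (Nat.zero_le j)).isHermitian.apply i k
    simp only [star_trivial, sub_apply] at hsymm
    simp only [add_dotProduct, dotProduct_add, mulVec_add, mulVec_single_one,
      single_dotProduct, one_mul, col_apply]
    linarith
  refine ⟨of fun i k => (c (Pi.single i 1 + Pi.single k 1) - c (Pi.single i 1)
    - c (Pi.single k 1) + (P 0 i k - P 0 k i)) / 2, ?_⟩
  refine tendsto_pi_nhds.2 fun i => tendsto_pi_nhds.2 fun k => ?_
  exact (((((hc _).sub (hc _)).sub (hc _)).add tendsto_const_nhds).div_const 2).congr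
    fun j => (hpol j i k).symm

end Matrix

theorem IsHurwitz.of_lyapunov {n : ℕ} {F X M : Matrix (Fin n) (Fin n) ℝ} (hX : X.PosDef)
    (hM : M.PosSemidef) (h : Fᵀ * X + X * F + M = 0)
    (hobs : ∀ (μ : ℂ) (v : Fin n → ℂ), v ≠ 0 → F.map ofReal *ᵥ v = μ • v →
      M.map ofReal *ᵥ v ≠ 0) :
    IsHurwitz F := by
  intro μ hμ
  by_contra! hre
  obtain ⟨v, hv, hFv⟩ := (mem_spectrum_iff_exists_mulVec_eq_smul _ _).1 hμ
  refine hobs μ v hv hFv ((hM.map_ofReal.dotProduct_mulVec_zero_iff v).1 ?_)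
  have key : ((2 * μ.re : ℝ) : ℂ) * (star v ⬝ᵥ X.map ofReal *ᵥ v)
      + star v ⬝ᵥ M.map ofReal *ᵥ v = 0 := by
    rw [← star_dotProduct_lyapunov_mulVec_of_mulVec_eq_smul _ hFv, ← dotProduct_add,
      ← add_mulVec, ← map_ofReal_transpose, ← map_ofReal_mul, ← map_ofReal_mul,
      ← map_ofReal_add, ← map_ofReal_add, h]
    simp
  have h2re : (0 : ℂ) ≤ ((2 * μ.re : ℝ) : ℂ) := by
    exact_mod_cast (by linarith : (0:ℝ) ≤ 2 * μ.re)
  exact ((add_eq_zero_iff_of_nonneg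
    (mul_nonneg h2re (hX.map_ofReal.dotProduct_mulVec_pos hv).le)
    (hM.map_ofReal.dotProduct_mulVec_nonneg v)).1 key).2

theorem obsMat_rank_lt_of_mulVec_eq_smul {n p : ℕ} {A : Matrix (Fin n) (Fin n) ℝ}
    {H : Matrix (Fin p) (Fin n) ℝ} {μ : ℂ} {v : Fin n → ℂ} (hv : v ≠ 0)
    (hAv : A.map ofReal *ᵥ v = μ • v) (hHv : H.map ofReal *ᵥ v = 0) :
    (obsMat A H).rank < n := by
  have hpow : ∀ k : ℕ, (A ^ k).map ofReal *ᵥ v = μ ^ k • v := by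
    intro k
    induction k with
    | zero => simp
    | succ k ih =>
      rw [pow_succ', map_ofReal_mul, ← mulVec_mulVec, ih, mulVec_smul, hAv, smul_smul, pow_succ]
  simpa using rank_lt_card_of_map_ofReal_mulVec_eq_zero hv (O := obsMat A H) (by
    ext ⟨k, r⟩
    change ((H * A ^ (k : ℕ)).map ofReal *ᵥ v) r = 0
    rw [map_ofReal_mul, ← mulVec_mulVec, hpow, mulVec_smul, hHv, smul_zero, Pi.zero_apply])

theorem isHurwitz_sub_mul_of_lyapunov {n m p : ℕ} {A : Matrix (Fin n) (Fin n) ℝ}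
    {B : Matrix (Fin n) (Fin m) ℝ} {H : Matrix (Fin p) (Fin n) ℝ} {R : Matrix (Fin m) (Fin m) ℝ}
    {K : Matrix (Fin m) (Fin n) ℝ} {X N : Matrix (Fin n) (Fin n) ℝ}
    (hobs : (obsMat A H).rank = n) (hR : R.PosDef) (hX : X.PosDef) (hN : N.PosSemidef)
    (h : (A - B * K)ᵀ * X + X * (A - B * K) + Hᵀ * H + Kᵀ * R * K + N = 0) :
    IsHurwitz (A - B * K) := by
  have hH := posSemidef_transpose_mul_self H
  have hK := hR.posSemidef.transpose_mul_mul_same K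
  refine IsHurwitz.of_lyapunov hX ((hH.add hK).add hN) (by rw [← h]; abel) ?_
  intro μ v hv hFv hMv
  -- `v` lies in `ker H ∩ ker K`, so it is an eigenvector of `A` that `H` does not see
  rw [map_ofReal_add] at hMv
  have hHK := (hH.add hK).map_ofReal.mulVec_eq_zero_of_add_mulVec_eq_zero hN.map_ofReal hMv
  rw [map_ofReal_add] at hHK
  have hHv : H.map ofReal *ᵥ v = 0 := by
    have := hH.map_ofReal.mulVec_eq_zero_of_add_mulVec_eq_zero hK.map_ofReal hHK
    rw [map_ofReal_mul, map_ofReal_transpose] at this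
    simpa using congrArg (v ∈ ·) (ker_mulVecLin_conjTranspose_mul_self (H.map ofReal)) |>.mp this
  have hKv : K.map ofReal *ᵥ v = 0 := by
    have := hK.map_ofReal.mulVec_eq_zero_of_add_mulVec_eq_zero hH.map_ofReal
      (by rwa [add_comm] at hHK)
    rw [map_ofReal_mul, map_ofReal_mul, map_ofReal_transpose] at this
    exact hR.map_ofReal.mulVec_eq_zero_of_conjTranspose_mul_mul_mulVec_eq_zero this
  have hAv : A.map ofReal *ᵥ v = μ • v := by
    rwa [map_ofReal_sub, map_ofReal_mul, sub_mulVec, ← mulVec_mulVec, hKv, mulVec_zero,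
      sub_zero] at hFv
  exact (obsMat_rank_lt_of_mulVec_eq_smul hv hAv hHv).ne hobs

theorem tendsto_pow_atTop_nhds_zero_of_spectrum_subset_ball {𝔸 : Type*} [NormedRing 𝔸]
    [NormedAlgebra ℂ 𝔸] [CompleteSpace 𝔸] {a : 𝔸} (ha : ∀ l ∈ spectrum ℂ a, ‖l‖ < 1) :
    Tendsto (fun k : ℕ => a ^ k) atTop (𝓝 0) := by
  rcases subsingleton_or_nontrivial 𝔸 with h𝔸 | h𝔸
  · exact tendsto_const_nhds.congr fun k => Subsingleton.elim _ _
  have h : spectralRadius ℂ a < (1 : ℝ≥0) :=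
    spectrum.spectralRadius_lt_of_forall_lt a fun l hl => by exact_mod_cast ha l hl
  obtain ⟨r, hρr, hr1⟩ := ENNReal.lt_iff_exists_nnreal_btwn.mp h
  refine squeeze_zero_norm' ?_ (tendsto_pow_atTop_nhds_zero_of_lt_one r.coe_nonneg
    (by exact_mod_cast hr1))
  have hgelfand := spectrum.pow_nnnorm_pow_one_div_tendsto_nhds_spectralRadius a
  filter_upwards [hgelfand.eventually_lt_const hρr, eventually_gt_atTop 0] with k hk hk0
  rw [one_div, ← ENNReal.coe_rpow_of_nonneg _ (by positivity), ENNReal.coe_lt_coe,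
    NNReal.rpow_inv_lt_iff (by positivity), NNReal.rpow_natCast] at hk
  exact_mod_cast hk.le

theorem Complex.norm_lt_one_of_re_div_neg {l : ℂ} (h : ((l - 1) / (l + 1)).re < 0) : ‖l‖ < 1 := by
  have hre : ((l - 1) / (l + 1)).re = (normSq l - 1) / normSq (l + 1) := by
    rw [div_re, normSq_apply, normSq_apply]
    simp only [sub_re, sub_im, add_re, add_im, one_re, one_im]
    ring
  rw [hre, div_neg_iff] at h
  have : normSq l < 1 := by rcases h with h | h <;> nlinarith [normSq_nonneg (l + 1)]
  rwa [← sq_lt_one_iff₀ (norm_nonneg l), ← normSq_eq_norm_sq]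

theorem IsHurwitz.isUnit_det_one_sub {n : ℕ} {F : Matrix (Fin n) (Fin n) ℝ} (hF : IsHurwitz F) :
    IsUnit (1 - F).det := by
  refine isUnit_iff_ne_zero.mpr fun hdet => ?_
  obtain ⟨v, hv, h⟩ := exists_mulVec_eq_zero_iff.mpr
    (show ((1 - F).map ofReal).det = 0 by rw [det_map_ofReal, hdet, ofReal_zero])
  rw [map_ofReal_sub, map_ofReal_one, sub_mulVec, one_mulVec, sub_eq_zero, eq_comm] at h
  have := hF 1 ((mem_spectrum_iff_exists_mulVec_eq_smul _ _).2 ⟨v, hv, by rw [h, one_smul]⟩)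
  norm_num at this

theorem IsHurwitz.norm_lt_one_of_mem_spectrum_cayley {n : ℕ} {F : Matrix (Fin n) (Fin n) ℝ}
    (hF : IsHurwitz F) {l : ℂ} (hl : l ∈ spectrum ℂ (((1 + F) * (1 - F)⁻¹).map ofReal)) :
    ‖l‖ < 1 := by
  obtain ⟨w, hw, hlw⟩ := (mem_spectrum_iff_exists_mulVec_eq_smul _ _).1 hl
  set v := (1 - F)⁻¹.map ofReal *ᵥ w
  have hvw : (1 - F).map ofReal *ᵥ v = w := by
    rw [mulVec_mulVec, ← map_ofReal_mul, mul_nonsing_inv _ hF.isUnit_det_one_sub, map_ofReal_one,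
      one_mulVec]
  have hv : v ≠ 0 := by
    rintro h
    rw [h, mulVec_zero] at hvw
    exact hw hvw.symm
  have hcay : (1 + F).map ofReal *ᵥ v = l • w := by rw [← hlw, map_ofReal_mul, ← mulVec_mulVec]
  rw [← hvw, map_ofReal_add, map_ofReal_sub, map_ofReal_one, add_mulVec, sub_mulVec, one_mulVec,
    smul_sub] at hcay
  have hlin : (l + 1) • (F.map ofReal *ᵥ v) = (l - 1) • v := by
    linear_combination (norm := module) hcay
  have hl1 : l + 1 ≠ 0 := by
    intro h
    rw [h, zero_smul, eq_comm, smul_eq_zero, sub_eq_zero] at hlin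
    rcases hlin with rfl | h0
    · norm_num at h
    · exact hv h0
  have heig : F.map ofReal *ᵥ v = ((l - 1) / (l + 1)) • v := by
    apply smul_right_injective _ hl1
    simp only [smul_smul, mul_div_cancel₀ _ hl1, hlin]
  exact Complex.norm_lt_one_of_re_div_neg
    (hF _ ((mem_spectrum_iff_exists_mulVec_eq_smul _ _).2 ⟨v, hv, heig⟩))

section CayleyTransform

-- Gelfand's formula needs a Banach algebra norm; the operator norm induces the usual topology.
attribute [local instance] Matrix.linftyOpNormedRing Matrix.linftyOpNormedAlgebra

theorem IsHurwitz.tendsto_cayley_pow {n : ℕ} {F : Matrix (Fin n) (Fin n) ℝ} (hF : IsHurwitz F) :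
    Tendsto (fun k : ℕ => ((1 + F) * (1 - F)⁻¹) ^ k) atTop (𝓝 0) := by
  have := ((continuous_id.matrix_map continuous_re).tendsto 0).comp
    (tendsto_pow_atTop_nhds_zero_of_spectrum_subset_ball fun _ =>
      hF.norm_lt_one_of_mem_spectrum_cayley)
  simpa [Function.comp_def, ← map_ofReal_pow, Matrix.map_map] using this

end CayleyTransform

theorem IsHurwitz.posSemidef_of_lyapunov {n : ℕ} {F X M : Matrix (Fin n) (Fin n) ℝ}
    (hF : IsHurwitz F) (hM : M.PosSemidef) (h : Fᵀ * X + X * F + M = 0) : X.PosSemidef :=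
  posSemidef_of_tendsto_pow hF.tendsto_cayley_pow
    (sub_cayley_transpose_mul_mul_cayley hF.isUnit_det_one_sub h ▸
      (hM.add hM).transpose_mul_mul_same _)

section PolicyIteration

variable {ι κ : Type*} [Fintype ι] [Fintype κ]

def lyapunovResidual (A : Matrix ι ι ℝ) (B : Matrix ι κ ℝ) (W : Matrix ι ι ℝ)
    (R : Matrix κ κ ℝ) (K : Matrix κ ι ℝ) (P : Matrix ι ι ℝ) : Matrix ι ι ℝ :=
  (A - B * K)ᵀ * P + P * (A - B * K) + W + Kᵀ * R * K

variable {A : Matrix ι ι ℝ} {B : Matrix ι κ ℝ} {W : Matrix ι ι ℝ} {R : Matrix κ κ ℝ}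

theorem lyapunovResidual_sub_lyapunovResidual (K : Matrix κ ι ℝ) (P P' : Matrix ι ι ℝ) :
    lyapunovResidual A B W R K P - lyapunovResidual A B W R K P'
      = (A - B * K)ᵀ * (P - P') + (P - P') * (A - B * K) := by
  simp only [lyapunovResidual, mul_sub, sub_mul]
  abel

theorem continuous_lyapunovResidual :
    Continuous fun KP : Matrix κ ι ℝ × Matrix ι ι ℝ => lyapunovResidual A B W R KP.1 KP.2 := by
  unfold lyapunovResidual
  fun_prop

variable [DecidableEq κ]

theorem lyapunovResidual_eq_lyapunovResidual_gain_add (hR : IsUnit R.det) (hRs : Rᵀ = R)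
    {P : Matrix ι ι ℝ} (hP : Pᵀ = P) (K : Matrix κ ι ℝ) :
    lyapunovResidual A B W R K P = lyapunovResidual A B W R (R⁻¹ * Bᵀ * P) P
      + (K - R⁻¹ * Bᵀ * P)ᵀ * R * (K - R⁻¹ * Bᵀ * P) := by
  set G := R⁻¹ * Bᵀ * P
  have hBP : Bᵀ * P = R * G := by
    rw [← Matrix.mul_assoc, ← Matrix.mul_assoc, mul_nonsing_inv _ hR, Matrix.one_mul]
  have hPB (X : Matrix κ ι ℝ) : P * (B * X) = Gᵀ * (R * X) := by
    have := congrArg transpose hBP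
    rw [transpose_mul, transpose_mul, transpose_transpose, hP, hRs] at this
    rw [← Matrix.mul_assoc, this, Matrix.mul_assoc]
  simp only [lyapunovResidual, transpose_sub, transpose_mul, Matrix.sub_mul, Matrix.mul_sub,
    Matrix.mul_assoc, hBP, hPB]
  abel

theorem lyapunovResidual_gain (hR : IsUnit R.det) (hRs : Rᵀ = R) {P : Matrix ι ι ℝ}
    (hP : Pᵀ = P) :
    lyapunovResidual A B W R (R⁻¹ * Bᵀ * P) P = Aᵀ * P + P * A + W - P * B * R⁻¹ * Bᵀ * P := by
  have h := lyapunovResidual_eq_lyapunovResidual_gain_add (A := A) (B := B) (W := W) hR hRs hP 0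
  have hG : (0 - R⁻¹ * Bᵀ * P)ᵀ * R * (0 - R⁻¹ * Bᵀ * P) = P * B * R⁻¹ * Bᵀ * P := by
    simp only [zero_sub, transpose_neg, Matrix.neg_mul, Matrix.mul_neg, neg_neg, transpose_mul,
      transpose_transpose, transpose_nonsing_inv, hP, hRs, Matrix.mul_assoc,
      nonsing_inv_mul_cancel_left _ _ hR]
  rw [eq_sub_iff_add_eq, ← hG, ← h]
  simp [lyapunovResidual]

theorem lyapunovResidual_gain_le (hR : R.PosDef) {P : Matrix ι ι ℝ} (hP : Pᵀ = P)
    (K : Matrix κ ι ℝ) :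
    lyapunovResidual A B W R (R⁻¹ * Bᵀ * P) P ≤ lyapunovResidual A B W R K P := by
  rw [lyapunovResidual_eq_lyapunovResidual_gain_add ((isUnit_iff_isUnit_det R).1 hR.isUnit)
    hR.transpose_eq_self hP K]
  exact le_add_of_nonneg_right (hR.posSemidef.transpose_mul_mul_same _).nonneg

theorem tendsto_gain_and_lyapunovResidual_eq_zero {K : ℕ → Matrix κ ι ℝ}
    {P : ℕ → Matrix ι ι ℝ} {Plim : Matrix ι ι ℝ}
    (hres : ∀ j, lyapunovResidual A B W R (K j) (P j) = 0)
    (hK : ∀ j, K (j + 1) = R⁻¹ * Bᵀ * P j) (hP : Tendsto P atTop (𝓝 Plim)) :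
    Tendsto K atTop (𝓝 (R⁻¹ * Bᵀ * Plim)) ∧
      lyapunovResidual A B W R (R⁻¹ * Bᵀ * Plim) Plim = 0 := by
  have hKlim : Tendsto K atTop (𝓝 (R⁻¹ * Bᵀ * Plim)) := (tendsto_add_atTop_iff_nat 1).1 <| by
    simp only [hK]
    exact ((continuous_const.matrix_mul continuous_id).tendsto Plim).comp hP
  refine ⟨hKlim, tendsto_nhds_unique
    ((continuous_lyapunovResidual.tendsto (R⁻¹ * Bᵀ * Plim, Plim)).comp
      (hKlim.prodMk_nhds hP)) ?_⟩
  simp [Function.comp_def, hres]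

end PolicyIteration

section ClosedLoop

variable {n m : ℕ} {A : Matrix (Fin n) (Fin n) ℝ} {B : Matrix (Fin n) (Fin m) ℝ}
  {W : Matrix (Fin n) (Fin n) ℝ} {R : Matrix (Fin m) (Fin m) ℝ} {K : Matrix (Fin m) (Fin n) ℝ}
  {P P' : Matrix (Fin n) (Fin n) ℝ}

theorem IsHurwitz.le_of_lyapunovResidual_le (hF : IsHurwitz (A - B * K))
    (h : lyapunovResidual A B W R K P ≤ lyapunovResidual A B W R K P') : P' ≤ P :=
  hF.posSemidef_of_lyapunov h (by rw [← lyapunovResidual_sub_lyapunovResidual]; abel)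

theorem IsHurwitz.riccati_le (hF : IsHurwitz (A - B * K)) (hR : R.PosDef) (hP' : P'ᵀ = P')
    (h' : lyapunovResidual A B W R (R⁻¹ * Bᵀ * P') P' = 0)
    (h : lyapunovResidual A B W R K P = 0) : P' ≤ P :=
  hF.le_of_lyapunovResidual_le (by rw [h, ← h']; exact lyapunovResidual_gain_le hR hP' K)

theorem IsHurwitz.policyImprovement_le (hF : IsHurwitz (A - B * (R⁻¹ * Bᵀ * P)))
    (hR : R.PosDef) (hP : Pᵀ = P) (h : lyapunovResidual A B W R K P = 0)
    (h' : lyapunovResidual A B W R (R⁻¹ * Bᵀ * P) P' = 0) : P' ≤ P :=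
  hF.le_of_lyapunovResidual_le (by rw [h', ← h]; exact lyapunovResidual_gain_le hR hP K)

theorem isHurwitz_gain_of_lyapunovResidual_eq_zero {p : ℕ} {H : Matrix (Fin p) (Fin n) ℝ}
    (hobs : (obsMat A H).rank = n) (hR : R.PosDef) (hP : P.PosDef)
    (h : lyapunovResidual A B (Hᵀ * H) R K P = 0) : IsHurwitz (A - B * (R⁻¹ * Bᵀ * P)) := by
  rw [lyapunovResidual_eq_lyapunovResidual_gain_add ((isUnit_iff_isUnit_det R).1 hR.isUnit)
    hR.transpose_eq_self hP.transpose_eq_self K] at h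
  exact isHurwitz_sub_mul_of_lyapunov hobs hR hP (hR.posSemidef.transpose_mul_mul_same _) h

end ClosedLoop

theorem statement12_general {n m p : ℕ}
    (A : Matrix (Fin n) (Fin n) ℝ) (B : Matrix (Fin n) (Fin m) ℝ)
    (C : Matrix (Fin p) (Fin n) ℝ)
    (Q : Matrix (Fin p) (Fin p) ℝ)
    (R : Matrix (Fin m) (Fin m) ℝ) (hRsym : Rᵀ = R) (hR : R.PosDef)
    (sqrtQ : Matrix (Fin p) (Fin p) ℝ) (hsqrtQ : sqrtQ.PosSemidef)
    (hsqrtQQ : sqrtQ * sqrtQ = Q)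
    (hobs : (obsMat A (sqrtQ * C)).rank = n)
    (Pstar : Matrix (Fin n) (Fin n) ℝ) (hPstarSym : Pstarᵀ = Pstar)
    (hPstarPD : Pstar.PosDef)
    (hPstarRic : Aᵀ * Pstar + Pstar * A + Cᵀ * Q * C
      - Pstar * B * R⁻¹ * Bᵀ * Pstar = 0)
    (Kstar : Matrix (Fin m) (Fin n) ℝ) (hKstar : Kstar = R⁻¹ * Bᵀ * Pstar)
    (K : ℕ → Matrix (Fin m) (Fin n) ℝ) (P : ℕ → Matrix (Fin n) (Fin n) ℝ)
    (hK0 : IsHurwitz (A - B * K 0))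
    (hP : ∀ j : ℕ, (P j)ᵀ = P j ∧
      (A - B * K j)ᵀ * P j + P j * (A - B * K j) + Cᵀ * Q * C + (K j)ᵀ * R * K j = 0)
    (hKsucc : ∀ j : ℕ, K (j + 1) = R⁻¹ * Bᵀ * P j) :
    (∀ j : ℕ, IsHurwitz (A - B * K j)) ∧
    (∀ j : ℕ, (P j - P (j + 1)).PosSemidef ∧ (P (j + 1) - Pstar).PosSemidef) ∧
    Tendsto K atTop (𝓝 Kstar) ∧ Tendsto P atTop (𝓝 Pstar) := by
  subst hKstar
  have hW : Cᵀ * Q * C = (sqrtQ * C)ᵀ * (sqrtQ * C) := by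
    rw [transpose_mul, (isHermitian_iff_isSymm.1 hsqrtQ.isHermitian).eq, ← hsqrtQQ]
    simp only [Matrix.mul_assoc]
  have hres (j : ℕ) : lyapunovResidual A B (Cᵀ * Q * C) R (K j) (P j) = 0 := (hP j).2
  have hstar : lyapunovResidual A B (Cᵀ * Q * C) R (R⁻¹ * Bᵀ * Pstar) Pstar = 0 := by
    rw [lyapunovResidual_gain ((isUnit_iff_isUnit_det R).1 hR.isUnit) hRsym hPstarSym, hPstarRic]
  have hlow (j : ℕ) (hj : IsHurwitz (A - B * K j)) : Pstar ≤ P j :=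
    hj.riccati_le hR hPstarSym hstar (hres j)
  have hHur (j : ℕ) : IsHurwitz (A - B * K j) := by
    induction j with
    | zero => exact hK0
    | succ j ih =>
      rw [hKsucc]
      refine isHurwitz_gain_of_lyapunovResidual_eq_zero hobs hR ?_ (hW ▸ hres j)
      simpa using hPstarPD.add_posSemidef (hlow j ih)
  have hanti : Antitone P := antitone_nat_of_succ_le fun j =>
    (hKsucc j ▸ hHur (j + 1)).policyImprovement_le hR (hP j).1 (hres j) (hKsucc j ▸ hres (j + 1))
  obtain ⟨Plim, hPlim⟩ := exists_tendsto_of_antitone_of_le hanti fun j => hlow j (hHur j)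
  obtain ⟨hKlim, hresLim⟩ := tendsto_gain_and_lyapunovResidual_eq_zero hres hKsucc hPlim
  have hPlimSym : Plimᵀ = Plim := tendsto_nhds_unique
    ((continuous_id.matrix_transpose.tendsto Plim).comp hPlim)
    (by simpa only [Function.comp_def, id, (hP _).1] using hPlim)
  have hPlimEq : Plim = Pstar := le_antisymm
    ((isHurwitz_gain_of_lyapunovResidual_eq_zero hobs hR hPstarPD (hW ▸ hstar)).riccati_le
      hR hPlimSym hresLim hstar)
    ((isClosed_Ici Pstar).mem_of_tendsto hPlim (Eventually.of_forall fun j => hlow j (hHur j)))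
  subst hPlimEq
  exact ⟨hHur, fun j => ⟨hanti j.le_succ, hlow (j + 1) (hHur (j + 1))⟩, hKlim, hPlim⟩

/-- Kleinman's policy iteration: starting from a stabilizing gain `K₀` and iterating
the Lyapunov equation `(A − BKⱼ)ᵀPⱼ + Pⱼ(A − BKⱼ) + CᵀQC + KⱼᵀRKⱼ = 0`,
`K_{j+1} = R⁻¹BᵀPⱼ`, one has for all `j`: (1) `A − BKⱼ` is Hurwitz;
(2) `P* ≤ P_{j+1} ≤ Pⱼ` in the Loewner order; (3) `Kⱼ → K*` and `Pⱼ → P*`. -/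
theorem statement12 {n m p : ℕ}
    (A : Matrix (Fin n) (Fin n) ℝ) (B : Matrix (Fin n) (Fin m) ℝ)
    (C : Matrix (Fin p) (Fin n) ℝ)
    (Q : Matrix (Fin p) (Fin p) ℝ) (hQsym : Qᵀ = Q) (hQ : Q.PosSemidef)
    (R : Matrix (Fin m) (Fin m) ℝ) (hRsym : Rᵀ = R) (hR : R.PosDef)
    (hstab : ∃ K : Matrix (Fin m) (Fin n) ℝ, IsHurwitz (A - B * K))
    (sqrtQ : Matrix (Fin p) (Fin p) ℝ) (hsqrtQ : sqrtQ.PosSemidef)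
    (hsqrtQQ : sqrtQ * sqrtQ = Q)
    (hobs : (obsMat A (sqrtQ * C)).rank = n)
    (Pstar : Matrix (Fin n) (Fin n) ℝ) (hPstarSym : Pstarᵀ = Pstar)
    (hPstarPD : Pstar.PosDef)
    (hPstarRic : Aᵀ * Pstar + Pstar * A + Cᵀ * Q * C
      - Pstar * B * R⁻¹ * Bᵀ * Pstar = 0)
    (Kstar : Matrix (Fin m) (Fin n) ℝ) (hKstar : Kstar = R⁻¹ * Bᵀ * Pstar)
    (K : ℕ → Matrix (Fin m) (Fin n) ℝ) (P : ℕ → Matrix (Fin n) (Fin n) ℝ)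
    (hK0 : IsHurwitz (A - B * K 0))
    (hP : ∀ j : ℕ, (P j)ᵀ = P j ∧
      (A - B * K j)ᵀ * P j + P j * (A - B * K j) + Cᵀ * Q * C + (K j)ᵀ * R * K j = 0)
    (hKsucc : ∀ j : ℕ, K (j + 1) = R⁻¹ * Bᵀ * P j) :
    (∀ j : ℕ, IsHurwitz (A - B * K j)) ∧
    (∀ j : ℕ, (P j - P (j + 1)).PosSemidef ∧ (P (j + 1) - Pstar).PosSemidef) ∧
    Tendsto K atTop (𝓝 Kstar) ∧ Tendsto P atTop (𝓝 Pstar) :=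
  statement12_general A B C Q R hRsym hR sqrtQ hsqrtQ hsqrtQQ hobs Pstar hPstarSym hPstarPD
    hPstarRic Kstar hKstar K P hK0 hP hKsucc
end
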